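/- arXiv:2304.02864 — 4 statements merged into one kernel-verified Lean document; each statement's English description precedes it below -/
import Mathlib

section
/- The girth of X = J(v,k,i) (the length of a shortest cycle in X) equals 3 if and only if v ≥ 3(k − i). -/
/-- The generalized Johnson graph `J(v,k,i)`: vertices are the `k`-element subsets of a
`v`-element set, two vertices adjacent iff their intersection has exactly `i` elements. -/
def genJohnsonGraph (v k i : ℕ) :
    SimpleGraph {A : Finset (Fin v) // A.card = k} where
  Adj A B := A ≠ B ∧ (A.1 ∩ B.1).card = i
  symm := by
    constructor
    rintro A B ⟨hne, hcard⟩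
    exact ⟨hne.symm, by rwa [Finset.inter_comm]⟩
  loopless := by constructor; rintro A ⟨hne, -⟩; exact hne rfl

/-!
Girth 3 means a triangle `A, B, C`: three `k`-sets with pairwise intersections of size `i`. By
inclusion–exclusion such a triangle covers at least `3k - 3i` points, so `3(k - i) ≤ v`.
Conversely, write `i = x + p`, `k = x + 2p + q` with `x + 3p + 3q ≤ v` (possible when
`3(k - i) ≤ v` and `2k ≤ v`) and realise the Venn diagram with `x` points common to all three
sets, `p` points in each pairwise intersection only, and `q` points private to each set.
-/

open Finset

namespace SimpleGraph

variable {α : Type*} {G : SimpleGraph α}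

theorem girth_eq_three_iff_exists_triangle :
    G.girth = 3 ↔ ∃ a b c, G.Adj a b ∧ G.Adj a c ∧ G.Adj b c := by
  classical
  have triangle_iff := (is3Clique_iff_exists_cycle_length_three (G := G)).symm
  simp only [is3Clique_iff] at triangle_iff
  constructor
  · intro h
    have hcyclic : ¬G.IsAcyclic := girth_eq_zero.not.mp (by omega)
    obtain ⟨u, w, hw, hlen⟩ := exists_girth_eq_length.mpr hcyclic
    obtain ⟨-, a, b, c, hab, hac, hbc, -⟩ := triangle_iff.mp ⟨u, w, hw, by omega⟩
    exact ⟨a, b, c, hab, hac, hbc⟩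
  · rintro ⟨a, b, c, hab, hac, hbc⟩
    obtain ⟨u, w, hw, hlen⟩ := triangle_iff.mpr ⟨_, a, b, c, hab, hac, hbc, rfl⟩
    have hle := girth_le_length hw
    have hge := three_le_girth fun hG => hG w hw
    omega

end SimpleGraph

namespace Finset

variable {α : Type*} [DecidableEq α]

theorem card_add_card_add_card_le (A B C : Finset α) :
    #A + #B + #C ≤ #(A ∪ B ∪ C) + #(A ∩ B) + #(A ∩ C) + #(B ∩ C) := by
  have hAB := card_union_add_card_inter A B
  have hABC := card_union_add_card_inter (A ∪ B) C
  have hinter : #((A ∪ B) ∩ C) ≤ #(A ∩ C) + #(B ∩ C) := by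
    rw [union_inter_distrib_right]
    exact card_union_le _ _
  omega

theorem card_attachFin_inter {n : ℕ} {s t : Finset ℕ} (hs : ∀ m ∈ s, m < n)
    (ht : ∀ m ∈ t, m < n) : #(s.attachFin hs ∩ t.attachFin ht) = #(s ∩ t) := by
  rw [← card_map Fin.valEmbedding, map_inter, map_valEmbedding_attachFin,
    map_valEmbedding_attachFin]

theorem card_Ico_union_Ico {a b c d : ℕ} (hbc : b ≤ c) :
    #(Ico a b ∪ Ico c d) = (b - a) + (d - c) := by
  have hdisj : Disjoint (Ico a b) (Ico c d) :=
    disjoint_left.mpr fun m hab hcd => by simp only [mem_Ico] at hab hcd; omega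
  rw [card_union_of_disjoint hdisj, Nat.card_Ico, Nat.card_Ico]

end Finset

/-- The three sets are cut out of consecutive blocks
`[0,x) | Q_C | P_CA | Q_A | P_AB | Q_B | P_BC` of sizes `x, q, p, q, p, q, p`: the block
`[0,x)` is common to all three, each `P` lies in exactly two sets and each `Q` in one. -/
theorem exists_finsets_nat_card_inter (x p q : ℕ) :
    ∃ A B C : Finset ℕ, A ∪ B ∪ C ⊆ range (x + 3 * p + 3 * q) ∧
      #A = x + 2 * p + q ∧ #B = x + 2 * p + q ∧ #C = x + 2 * p + q ∧
      #(A ∩ B) = x + p ∧ #(A ∩ C) = x + p ∧ #(B ∩ C) = x + p := by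
  set A := Ico 0 x ∪ Ico (x + q) (x + 2 * q + 2 * p)
  set B := Ico 0 x ∪ Ico (x + 2 * q + p) (x + 3 * q + 3 * p)
  set C := Ico 0 (x + q + p) ∪ Ico (x + 3 * q + 2 * p) (x + 3 * q + 3 * p)
  have hAB : A ∩ B = Ico 0 x ∪ Ico (x + 2 * q + p) (x + 2 * q + 2 * p) := by
    ext m; simp only [A, B, mem_union, mem_inter, mem_Ico]; omega
  have hAC : A ∩ C = Ico 0 x ∪ Ico (x + q) (x + q + p) := by
    ext m; simp only [A, C, mem_union, mem_inter, mem_Ico]; omega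
  have hBC : B ∩ C = Ico 0 x ∪ Ico (x + 3 * q + 2 * p) (x + 3 * q + 3 * p) := by
    ext m; simp only [B, C, mem_union, mem_inter, mem_Ico]; omega
  refine ⟨A, B, C, ?_, ?_, ?_, ?_, ?_, ?_, ?_⟩
  · intro m; simp only [A, B, C, mem_union, mem_Ico, mem_range]; omega
  all_goals
    simp only [A, B, C, hAB, hAC, hBC]
    rw [card_Ico_union_Ico (by omega)]
    omega

theorem exists_finsets_fin_card_inter {n k i : ℕ} (hik : i ≤ k) (h2k : 2 * k ≤ n)
    (h3 : 3 * (k - i) ≤ n) :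
    ∃ A B C : Finset (Fin n), #A = k ∧ #B = k ∧ #C = k ∧
      #(A ∩ B) = i ∧ #(A ∩ C) = i ∧ #(B ∩ C) = i := by
  -- take `x = 0` if `2i ≤ k` and `q = 0` otherwise
  obtain ⟨x, p, q, rfl, rfl, hn⟩ :
      ∃ x p q, x + p = i ∧ x + 2 * p + q = k ∧ x + 3 * p + 3 * q ≤ n := by
    rcases le_total (2 * i) k with h | h
    · exact ⟨0, i, k - 2 * i, by omega, by omega, by omega⟩
    · exact ⟨2 * i - k, k - i, 0, by omega, by omega, by omega⟩
  obtain ⟨A, B, C, hsub, hA, hB, hC, hAB, hAC, hBC⟩ := exists_finsets_nat_card_inter x p q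
  have hlt : ∀ m ∈ A ∪ B ∪ C, m < n := fun m hm => (mem_range.mp (hsub hm)).trans_le hn
  have hAn : ∀ m ∈ A, m < n := fun m hm => hlt m (by simp [hm])
  have hBn : ∀ m ∈ B, m < n := fun m hm => hlt m (by simp [hm])
  have hCn : ∀ m ∈ C, m < n := fun m hm => hlt m (by simp [hm])
  exact ⟨A.attachFin hAn, B.attachFin hBn, C.attachFin hCn,
    by simpa, by simpa, by simpa, by rwa [card_attachFin_inter], by rwa [card_attachFin_inter],
    by rwa [card_attachFin_inter]⟩

theorem genJohnsonGraph_adj_iff {v k i : ℕ} (hik : i ≠ k) {A B : {A : Finset (Fin v) // #A = k}} :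
    (genJohnsonGraph v k i).Adj A B ↔ #(A.1 ∩ B.1) = i := by
  refine ⟨And.right, fun h => ⟨?_, h⟩⟩
  rintro rfl
  rw [inter_self, A.2] at h
  exact hik h.symm

theorem girth_eq_three_iff_general (v k i : ℕ) (hik : i < k)
    (h2k : 2 * k ≤ v) :
    (genJohnsonGraph v k i).girth = 3 ↔ 3 * (k - i) ≤ v := by
  simp only [SimpleGraph.girth_eq_three_iff_exists_triangle, genJohnsonGraph_adj_iff hik.ne]
  constructor
  · rintro ⟨⟨A, hA⟩, ⟨B, hB⟩, ⟨C, hC⟩, hAB, hAC, hBC⟩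
    dsimp only at hAB hAC hBC
    have hunion := card_add_card_add_card_le A B C
    have hv := card_le_univ (A ∪ B ∪ C)
    rw [Fintype.card_fin] at hv
    omega
  · intro h3
    obtain ⟨A, B, C, hA, hB, hC, hAB, hAC, hBC⟩ := exists_finsets_fin_card_inter hik.le h2k h3
    exact ⟨⟨A, hA⟩, ⟨B, hB⟩, ⟨C, hC⟩, hAB, hAC, hBC⟩

/-- The girth of `J(v,k,i)` equals 3 iff `v ≥ 3(k - i)`. -/
theorem girth_eq_three_iff (v k i : ℕ) (hik : i < k) (hkv : k < v)
    (h2k : 2 * k ≤ v) (hexc : ¬(v = 2 * k ∧ i = 0)) :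
    (genJohnsonGraph v k i).girth = 3 ↔ 3 * (k - i) ≤ v :=
  girth_eq_three_iff_general v k i hik h2k
end

section
/- If i = 0, then the diameter of X = J(v,k,0) (the Kneser graph) equals ⌈(k − 1)/(v − 2k)⌉ + 1. -/
/-!
Write `d = v - 2k` and `σ = |A ∩ B|`. If `X` and `Y` are disjoint `k`-sets, then
`|X ∩ B| + |Y ∩ B|` lies between `k - d` and `k`. Hence two steps change `|· ∩ B|` by at most `d`,
and a walk from `A` to `B` of length `2p` forces `k - σ ≤ p d`, one of length `2p + 1` forces
`σ ≤ p d`. Conversely, two steps through a `k`-set avoiding both ends can gain `d` points of `B`, so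
these bounds are attained and `dist(A, B) = min (2⌈(k - σ)/d⌉) (2⌈σ/d⌉ + 1)`.
Since `⌈a/d⌉ + ⌈b/d⌉ ≤ ⌈(a + b - 1)/d⌉ + 1`, this is at most `t + 1` with `t = ⌈(k - 1)/d⌉`, with
equality for `σ = k - 1 - ⌊t/2⌋ d`.
-/

open Finset SimpleGraph

lemma Nat.ceilDiv_add_ceilDiv_le {d : ℕ} (hd : 0 < d) (a b : ℕ) :
    a ⌈/⌉ d + b ⌈/⌉ d ≤ (a + b - 1) ⌈/⌉ d + 1 := by
  simp only [Nat.ceilDiv_eq_add_pred_div]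
  rcases Nat.eq_zero_or_pos (a + b) with hab | hab
  · obtain ⟨rfl, rfl⟩ : a = 0 ∧ b = 0 := by omega
    simpa using Nat.div_le_of_le_mul (by omega)
  calc (a + d - 1) / d + (b + d - 1) / d ≤ (a + d - 1 + (b + d - 1)) / d :=
        Nat.div_add_div_le_add_div
    _ = (a + b - 1 + d - 1) / d + 1 := by
        rw [show a + d - 1 + (b + d - 1) = a + b - 1 + d - 1 + d by omega,
          Nat.add_div_right _ hd]

def kneserDist (k d σ : ℕ) : ℕ := min (2 * ((k - σ) ⌈/⌉ d)) (2 * (σ ⌈/⌉ d) + 1)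

lemma kneserDist_le {k d σ : ℕ} (hd : 0 < d) (hσ : σ ≤ k) :
    kneserDist k d σ ≤ (k - 1) ⌈/⌉ d + 1 :=
  calc kneserDist k d σ ≤ (k - σ) ⌈/⌉ d + σ ⌈/⌉ d := by unfold kneserDist; omega
    _ ≤ (k - σ + σ - 1) ⌈/⌉ d + 1 := Nat.ceilDiv_add_ceilDiv_le hd _ _
    _ = (k - 1) ⌈/⌉ d + 1 := by rw [Nat.sub_add_cancel hσ]

lemma le_kneserDist {k d : ℕ} (hk : 0 < k) (hd : 0 < d) :
    (k - 1) ⌈/⌉ d + 1 ≤ kneserDist k d (k - 1 - (k - 1) ⌈/⌉ d / 2 * d) := by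
  set t := (k - 1) ⌈/⌉ d
  have ht : 0 < t → d * (t - 1) < k - 1 := fun ht0 =>
    not_le.mp fun h => by have := (ceilDiv_le_iff_le_mul hd).2 h; omega
  have hsplit : t / 2 * d + d * ((t + 1) / 2 - 1) = d * (t - 1) := by
    rw [mul_comm, ← mul_add]; congr 1; omega
  have hσ : k - (k - 1 - t / 2 * d) = t / 2 * d + 1 := by
    rcases Nat.eq_zero_or_pos t with h0 | h0
    · rw [h0, Nat.zero_div, zero_mul]; omega
    · have := ht h0; omega
  unfold kneserDist
  rw [hσ]
  refine le_min ?_ ?_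
  · have : t / 2 < (t / 2 * d + 1) ⌈/⌉ d := by
      rw [← not_le, ceilDiv_le_iff_le_mul hd, mul_comm]; omega
    omega
  · rcases Nat.eq_zero_or_pos t with h0 | h0
    · omega
    have : (t + 1) / 2 - 1 < (k - 1 - t / 2 * d) ⌈/⌉ d := by
      rw [← not_le, ceilDiv_le_iff_le_mul hd]; have := ht h0; omega
    omega

section
variable {α : Type*} [DecidableEq α]

lemma Finset.card_inter_add_card_inter_add_card_sdiff {s t : Finset α} (h : Disjoint s t)
    (u : Finset α) : #(s ∩ u) + #(t ∩ u) + #(u \ (s ∪ t)) = #u := by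
  rw [← card_union_of_disjoint (h.mono inter_subset_left inter_subset_left),
    ← union_inter_distrib_right, inter_comm, card_inter_add_card_sdiff]

lemma Finset.exists_card_eq_card_union_le_min_le_card_inter (X B : Finset α) (hB : #B = #X)
    (d : ℕ) : ∃ D, #D = #X ∧ #(X ∪ D) ≤ #X + d ∧ min #X (#(X ∩ B) + d) ≤ #(D ∩ B) := by
  obtain ⟨S, hSB, hS⟩ := exists_subset_card_eq (min_le_right d #(B \ X))
  have hBX : #(B \ X) + #(X ∩ B) = #X := by
    rw [← hB, inter_comm, add_comm, card_inter_add_card_sdiff]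
  obtain ⟨T, hXBT, hTX, hT⟩ := exists_subsuperset_card_eq
    (inter_subset_left (s₁ := X) (s₂ := B)) (n := #X - #S) (by omega) (Nat.sub_le _ _)
  have hSX : Disjoint S X := sdiff_disjoint.mono_left hSB
  have hST : Disjoint S T := hSX.mono_right hTX
  refine ⟨S ∪ T, ?_, ?_, ?_⟩
  · rw [card_union_of_disjoint hST]
    have := card_le_card hSB
    omega
  · calc #(X ∪ (S ∪ T)) = #(X ∪ S) := by
          rw [union_comm S, ← union_assoc, union_eq_left.2 hTX]
      _ ≤ #X + #S := card_union_le _ _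
      _ ≤ #X + d := by omega
  · have hsub : S ∪ X ∩ B ⊆ (S ∪ T) ∩ B :=
      subset_inter (union_subset_union_right hXBT)
        (union_subset (hSB.trans sdiff_subset) inter_subset_right)
    have := card_le_card hsub
    rw [card_union_of_disjoint (hSX.mono_right inter_subset_left)] at this
    omega

lemma Finset.exists_card_eq_card_eq_card_inter_eq [Fintype α] {k s : ℕ} (hs : s ≤ k)
    (hk : 2 * k ≤ Fintype.card α) : ∃ A B : Finset α, #A = k ∧ #B = k ∧ #(A ∩ B) = s := by
  obtain ⟨A, -, hA⟩ := exists_subset_card_eq (s := (univ : Finset α)) (n := k)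
    (by rw [card_univ]; omega)
  obtain ⟨C, hCA, hC⟩ := exists_subset_card_eq (hA ▸ hs)
  obtain ⟨E, hEA, hE⟩ := exists_subset_card_eq (s := Aᶜ) (n := k - s) (by
    rw [card_compl, hA]; omega)
  have hAE : Disjoint A E := disjoint_of_subset_right hEA disjoint_compl_right
  refine ⟨A, C ∪ E, hA, ?_, ?_⟩
  · rw [card_union_of_disjoint (hAE.mono_left hCA), hC, hE]; omega
  · rw [inter_union_distrib_left, inter_eq_right.2 hCA, disjoint_iff_inter_eq_empty.1 hAE,
      union_empty, hC]

end

namespace genJohnsonGraph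

variable {v k : ℕ}

lemma adj_zero_iff_disjoint (hk : 0 < k) {X Y : {A : Finset (Fin v) // #A = k}} :
    (genJohnsonGraph v k 0).Adj X Y ↔ Disjoint X.1 Y.1 := by
  rw [disjoint_iff_inter_eq_empty, ← card_eq_zero]
  refine ⟨And.right, fun h => ⟨?_, h⟩⟩
  rintro rfl
  rw [inter_self, X.2] at h
  omega

lemma card_inter_add_card_inter_of_adj {X Y : {A : Finset (Fin v) // #A = k}}
    (hXY : (genJohnsonGraph v k 0).Adj X Y) (B : {A : Finset (Fin v) // #A = k}) :
    #(X.1 ∩ B.1) + #(Y.1 ∩ B.1) ≤ k ∧ k ≤ #(X.1 ∩ B.1) + #(Y.1 ∩ B.1) + (v - 2 * k) := by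
  have hdisj : Disjoint X.1 Y.1 := by
    rw [disjoint_iff_inter_eq_empty, ← card_eq_zero]; exact hXY.2
  have hsum := card_inter_add_card_inter_add_card_sdiff hdisj B.1
  have hrest : #(B.1 \ (X.1 ∪ Y.1)) ≤ v - 2 * k := by
    calc #(B.1 \ (X.1 ∪ Y.1)) ≤ #(X.1 ∪ Y.1)ᶜ := card_le_card fun x hx => by
          simpa using (mem_sdiff.1 hx).2
      _ = v - 2 * k := by rw [card_compl, card_union_of_disjoint hdisj, X.2, Y.2]; simp [two_mul]
  omega

lemma card_inter_bounds_of_walk {X B : {A : Finset (Fin v) // #A = k}}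
    (w : (genJohnsonGraph v k 0).Walk X B) (p : ℕ) :
    (w.length = 2 * p → k ≤ #(X.1 ∩ B.1) + p * (v - 2 * k)) ∧
      (w.length = 2 * p + 1 → #(X.1 ∩ B.1) ≤ p * (v - 2 * k)) := by
  induction w generalizing p with
  | @nil X => exact ⟨fun _ => by rw [inter_self, X.2]; omega, fun h => by simp at h⟩
  | @cons X Y B hXY w ih =>
    have hadj := card_inter_add_card_inter_of_adj hXY B
    rw [Walk.length_cons]
    refine ⟨fun h => ?_, fun h => ?_⟩
    · obtain ⟨q, rfl⟩ : ∃ q, p = q + 1 := ⟨p - 1, by omega⟩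
      have := (ih q).2 (by omega)
      rw [add_mul, one_mul]
      omega
    · have := (ih p).1 (by omega)
      omega

lemma edist_le_two_of_card_union_add_le (hk : 0 < k) {X D : {A : Finset (Fin v) // #A = k}}
    (h : #(X.1 ∪ D.1) + k ≤ v) : (genJohnsonGraph v k 0).edist X D ≤ 2 := by
  obtain ⟨C, hC, hCk⟩ := exists_subset_card_eq (s := (X.1 ∪ D.1)ᶜ) (n := k) (by
    rw [card_compl, Fintype.card_fin]; omega)
  have hCXD : Disjoint C (X.1 ∪ D.1) := disjoint_of_subset_left hC disjoint_compl_left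
  have hXC : (genJohnsonGraph v k 0).Adj X ⟨C, hCk⟩ :=
    (adj_zero_iff_disjoint hk).2 (disjoint_union_right.1 hCXD).1.symm
  have hCD : (genJohnsonGraph v k 0).Adj ⟨C, hCk⟩ D :=
    (adj_zero_iff_disjoint hk).2 (disjoint_union_right.1 hCXD).2
  exact (Walk.cons hXC (Walk.cons hCD Walk.nil)).edist_le

lemma edist_le_two_mul (hk : 0 < k) (hv : 2 * k ≤ v) (n : ℕ)
    {X B : {A : Finset (Fin v) // #A = k}} (h : k ≤ #(X.1 ∩ B.1) + n * (v - 2 * k)) :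
    (genJohnsonGraph v k 0).edist X B ≤ 2 * n := by
  induction n generalizing X with
  | zero =>
    have : X = B := Subtype.ext <| eq_of_subset_of_card_le
      (inter_eq_left.1 (eq_of_subset_of_card_le inter_subset_left (by rw [X.2]; omega)))
      (by rw [X.2, B.2])
    simp [this]
  | succ n ih =>
    obtain ⟨D, hD, hXD, hDB⟩ := exists_card_eq_card_union_le_min_le_card_inter X.1 B.1
      (by rw [X.2, B.2]) (v - 2 * k)
    rw [X.2] at hD hXD hDB
    calc (genJohnsonGraph v k 0).edist X B
        ≤ (genJohnsonGraph v k 0).edist X ⟨D, hD⟩ + (genJohnsonGraph v k 0).edist ⟨D, hD⟩ B :=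
          SimpleGraph.edist_triangle
      _ ≤ 2 + 2 * n := by
          gcongr
          · exact edist_le_two_of_card_union_add_le hk (by dsimp only; omega)
          · refine ih ?_
            dsimp only
            rw [add_mul, one_mul] at h
            omega
      _ = 2 * (n + 1 : ℕ) := by push_cast; ring

lemma edist_le_two_mul_add_one (hk : 0 < k) (hv : 2 * k ≤ v) (n : ℕ)
    {X B : {A : Finset (Fin v) // #A = k}} (h : #(X.1 ∩ B.1) ≤ n * (v - 2 * k)) :
    (genJohnsonGraph v k 0).edist X B ≤ 2 * n + 1 := by
  have hXB : #(X.1 ∩ B.1) + #(X.1 \ B.1) = k := by rw [card_inter_add_card_sdiff, X.2]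
  -- `Y` is a neighbour of `B` containing `X \ B`, so `|X ∩ Y| ≥ k - |X ∩ B|`.
  obtain ⟨Y, hXBY, hYBc, hY⟩ := exists_subsuperset_card_eq (n := k)
    (sdiff_subset_sdiff (subset_univ X.1) (subset_refl B.1)) (by omega)
    (by rw [← compl_eq_univ_sdiff, card_compl, Fintype.card_fin, B.2]; omega)
  have hXY : #(X.1 \ B.1) ≤ #(X.1 ∩ Y) := card_le_card (subset_inter sdiff_subset hXBY)
  have hYB : (genJohnsonGraph v k 0).Adj ⟨Y, hY⟩ B :=
    (adj_zero_iff_disjoint hk).2 (sdiff_disjoint.mono_left hYBc)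
  calc (genJohnsonGraph v k 0).edist X B
      ≤ (genJohnsonGraph v k 0).edist X ⟨Y, hY⟩ + (genJohnsonGraph v k 0).edist ⟨Y, hY⟩ B :=
        SimpleGraph.edist_triangle
    _ ≤ 2 * n + 1 := by
        gcongr
        · exact edist_le_two_mul hk hv n (by dsimp only; omega)
        · exact (edist_eq_one_iff_adj.2 hYB).le

theorem edist_eq_kneserDist (hk : 0 < k) (hv : 2 * k < v)
    (X B : {A : Finset (Fin v) // #A = k}) :
    (genJohnsonGraph v k 0).edist X B = kneserDist k (v - 2 * k) #(X.1 ∩ B.1) := by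
  have hd : 0 < v - 2 * k := by omega
  have hσ : #(X.1 ∩ B.1) ≤ k := (card_le_card inter_subset_left).trans X.2.le
  have hle : (genJohnsonGraph v k 0).edist X B ≤ kneserDist k (v - 2 * k) #(X.1 ∩ B.1) := by
    rw [kneserDist, Nat.mono_cast.map_min, le_min_iff]
    constructor
    · have := (ceilDiv_le_iff_le_mul hd).1 (le_refl ((k - #(X.1 ∩ B.1)) ⌈/⌉ (v - 2 * k)))
      exact_mod_cast edist_le_two_mul hk hv.le _ (by rw [mul_comm] at this; omega)
    · have := (ceilDiv_le_iff_le_mul hd).1 (le_refl (#(X.1 ∩ B.1) ⌈/⌉ (v - 2 * k)))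
      exact_mod_cast edist_le_two_mul_add_one hk hv.le _ (by rwa [mul_comm] at this)
  obtain ⟨w, hw⟩ :=
    exists_walk_of_edist_ne_top (ne_top_of_le_ne_top (ENat.natCast_ne_top _) hle)
  refine le_antisymm hle (hw ▸ Nat.cast_le.2 ?_)
  rcases Nat.even_or_odd' w.length with ⟨p, hp | hp⟩
  · have := (card_inter_bounds_of_walk w p).1 hp
    have : (k - #(X.1 ∩ B.1)) ⌈/⌉ (v - 2 * k) ≤ p :=
      (ceilDiv_le_iff_le_mul hd).2 (by rw [mul_comm]; omega)
    rw [kneserDist]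
    omega
  · have : #(X.1 ∩ B.1) ⌈/⌉ (v - 2 * k) ≤ p :=
      (ceilDiv_le_iff_le_mul hd).2 (by rw [mul_comm]; exact (card_inter_bounds_of_walk w p).2 hp)
    rw [kneserDist]
    omega

theorem ediam_eq (hk : 0 < k) (hv : 2 * k < v) :
    (genJohnsonGraph v k 0).ediam = ((k - 1) ⌈/⌉ (v - 2 * k) + 1 : ℕ) := by
  have hd : 0 < v - 2 * k := by omega
  refine le_antisymm (ediam_le_of_edist_le fun X B => ?_) ?_
  · rw [edist_eq_kneserDist hk hv]
    exact Nat.cast_le.2 (kneserDist_le hd ((card_le_card inter_subset_left).trans X.2.le))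
  · obtain ⟨A, B, hA, hB, hAB⟩ := exists_card_eq_card_eq_card_inter_eq
      (α := Fin v) ((Nat.sub_le _ _).trans (Nat.sub_le k 1))
      (by rw [Fintype.card_fin]; omega)
    calc (((k - 1) ⌈/⌉ (v - 2 * k) + 1 : ℕ) : ℕ∞)
        ≤ (genJohnsonGraph v k 0).edist ⟨A, hA⟩ ⟨B, hB⟩ := by
          rw [edist_eq_kneserDist hk hv]
          exact Nat.cast_le.2 (hAB ▸ le_kneserDist hk hd)
      _ ≤ (genJohnsonGraph v k 0).ediam := edist_le_ediam

end genJohnsonGraph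

theorem kneser_diam_general (v k i : ℕ) (hik : i < k)
    (h2k : 2 * k ≤ v) (hexc : ¬(v = 2 * k ∧ i = 0))
    (hi : i = 0) :
    (genJohnsonGraph v k i).diam = (k - 1) ⌈/⌉ (v - 2 * k) + 1 := by
  subst hi
  rw [SimpleGraph.diam, genJohnsonGraph.ediam_eq hik (by omega), ENat.toNat_natCast]

/-- If `i = 0` (the Kneser graph), the diameter of `J(v,k,0)` equals
`⌈(k - 1)/(v - 2k)⌉ + 1`. -/
theorem kneser_diam (v k i : ℕ) (hik : i < k) (hkv : k < v)
    (h2k : 2 * k ≤ v) (hexc : ¬(v = 2 * k ∧ i = 0))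
    (hi : i = 0) :
    (genJohnsonGraph v k i).diam = (k - 1) ⌈/⌉ (v - 2 * k) + 1 :=
  kneser_diam_general v k i hik h2k hexc hi
end

section
/- The diameter of X = J(v,k,i) is given by: diam(X) = ⌈(k − i − 1)/Δ⌉ + 1 if v < 3(k − i) − 1 or i = 0; diam(X) = 3 if 3(k − i) − 1 ≤ v < 3k − 2i and i ≠ 0; and diam(X) = ⌈k/(k − i)⌉ if v ≥ 3k − 2i and i ≠ 0. -/
/-!
Fix a vertex `A`. Along a walk `C₀, C₁, …` the numbers `t_j = |A ∩ C_j|` can only move by steps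
`t → t'` allowed by the Venn diagram of `A, C_j, C_{j+1}`, and conversely every allowed step is
realized by a neighbour. Hence `dist(C, A)` is the distance from `|A ∩ C|` to `k` in an explicit
graph on `{0, …, k}`, where every step has `k + i - Δ ≤ t + t' ≤ k + i` and `|t - t'| ≤ k - i`.
For `t ≥ i` two steps move `t` by at most `Δ` while one step can reflect it to `k + i - t`, which
gives the first formula. One step raises `t` by at most `k - i`, and when `3k ≤ v + 2i` the climb
`t → t + (k - i) → ⋯ → i → k` achieves this, which gives the third. When `v + 2i < 3k` a vertex
disjoint from `A` is at distance at least three, which gives the second.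
-/

namespace Finset

variable {α : Type*} [DecidableEq α]

theorem exists_subset_card_eq_card_inter_eq {s a : Finset α} {m n : ℕ} (hm : m ≤ #(s ∩ a))
    (hn : n ≤ #(s \ a)) : ∃ t ⊆ s, #t = m + n ∧ #(t ∩ a) = m := by
  obtain ⟨t₁, h₁, rfl⟩ := exists_subset_card_eq hm
  obtain ⟨t₂, h₂, rfl⟩ := exists_subset_card_eq hn
  have hdisj : Disjoint t₁ t₂ :=
    disjoint_of_subset_left h₁ (disjoint_of_subset_right h₂ (disjoint_sdiff_inter s a).symm)
  refine ⟨t₁ ∪ t₂, union_subset (h₁.trans inter_subset_left) (h₂.trans sdiff_subset),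
    card_union_of_disjoint hdisj, ?_⟩
  rw [union_inter_distrib_right, inter_eq_left.2 (h₁.trans inter_subset_right),
    disjoint_iff_inter_eq_empty.1 (disjoint_of_subset_left h₂ (sdiff_disjoint (s := a) (t := s))),
    union_empty]

theorem card_inter_le_card_inter_add_card_sdiff (a s t : Finset α) :
    #(a ∩ t) ≤ #(a ∩ s) + #(t \ s) := by
  refine (card_le_card fun x hx => ?_).trans (card_union_le _ _)
  simp only [mem_inter, mem_union, mem_sdiff] at hx ⊢
  tauto

theorem eq_of_card_inter_eq {s t : Finset α} (hst : #s = #t) (h : #(s ∩ t) = #s) : s = t := by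
  have hs : s ∩ t = s := eq_of_subset_of_card_le inter_subset_left h.ge
  exact eq_of_subset_of_card_le (hs ▸ inter_subset_right) hst.ge

theorem exists_card_eq_card_inter_eq [Fintype α] {k s : ℕ} (hs : s ≤ k)
    (hk : 2 * k ≤ Fintype.card α) : ∃ a b : Finset α, #a = k ∧ #b = k ∧ #(a ∩ b) = s := by
  obtain ⟨a, -, ha⟩ := exists_subset_card_eq (s := (univ : Finset α)) (n := k)
    (by rw [card_univ]; omega)
  obtain ⟨b, -, hb, hba⟩ := exists_subset_card_eq_card_inter_eq (s := univ) (a := a)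
    (m := s) (n := k - s) (by simpa [ha]) (by rw [← compl_eq_univ_sdiff, card_compl]; omega)
  exact ⟨a, b, ha, by omega, by rwa [inter_comm]⟩

end Finset

namespace SimpleGraph

theorem diam_eq_of_forall_exists_walk_length_le {V : Type*} {G : SimpleGraph V} {F : ℕ}
    (hle : ∀ u v, ∃ w : G.Walk u v, w.length ≤ F)
    (hge : ∃ u v, ∀ w : G.Walk u v, F ≤ w.length) : G.diam = F := by
  have hle' : G.ediam ≤ F := ediam_le_of_edist_le fun u v => by
    obtain ⟨w, hw⟩ := hle u v
    exact (G.edist_le w).trans (by exact_mod_cast hw)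
  have hge' : (F : ℕ∞) ≤ G.ediam := by
    obtain ⟨u, v, h⟩ := hge
    refine le_trans ?_ (G.edist_le_ediam (u := u) (v := v))
    exact le_sInf (by rintro _ ⟨w, rfl⟩; exact Nat.cast_le.2 (h w))
  rw [diam, le_antisymm hle' hge', ENat.toNat_natCast]

end SimpleGraph

namespace genJohnsonGraph

open Finset

/-- `IsStep v k i t t'`: `t` and `t'` can be the sizes of `A ∩ C` and `A ∩ C'` for `k`-subsets
`A, C, C'` of a `v`-set with `|C ∩ C'| = i`, i.e. the Venn diagram of `A, C, C'` can have regions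
of nonnegative size. -/
def IsStep (v k i t t' : ℕ) : Prop :=
  t' + i ≤ t + k ∧ t + i ≤ t' + k ∧ t + t' ≤ k + i ∧ 3 * k ≤ v + t + t' + i

section Venn

variable {α : Type*} [DecidableEq α] [Fintype α] {k i : ℕ}

theorem isStep_card_inter {a c c' : Finset α} (ha : #a = k) (hc : #c = k) (hc' : #c' = k)
    (hcc' : #(c ∩ c') = i) : IsStep (Fintype.card α) k i #(a ∩ c) #(a ∩ c') := by
  have hsdiff (s t : Finset α) (hs : #s = k) (hst : #(t ∩ s) = i) : #(s \ t) = k - i := by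
    rw [card_sdiff, hs, hst]
  have hik : i ≤ k := hc ▸ hcc' ▸ card_le_card inter_subset_left
  have h₁ := card_inter_le_card_inter_add_card_sdiff a c c'
  have h₂ := card_inter_le_card_inter_add_card_sdiff a c' c
  rw [hsdiff c' c hc' hcc'] at h₁
  rw [hsdiff c c' hc (by rwa [inter_comm])] at h₂
  have h₃ : #(a ∩ c) + #(a ∩ c') ≤ k + i := by
    rw [← card_union_add_card_inter, ← ha, ← hcc']
    exact add_le_add (card_le_card (union_subset inter_subset_left inter_subset_left))
      (card_le_card fun x hx => by simp only [mem_inter] at hx ⊢; tauto)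
  have h₄ : 3 * k ≤ Fintype.card α + #(a ∩ c) + #(a ∩ c') + i := by
    have e₁ := card_union_add_card_inter a c
    have e₂ := card_union_add_card_inter (a ∪ c) c'
    have e₃ := card_union_le (a ∩ c') (c ∩ c')
    have e₄ := card_le_univ ((a ∪ c) ∪ c')
    rw [union_inter_distrib_right] at e₂
    omega
  refine ⟨?_, ?_, h₃, h₄⟩ <;> omega

theorem exists_card_inter_eq_of_isStep {a c : Finset α} {t' : ℕ} (ha : #a = k) (hc : #c = k)
    (hk : 2 * k ≤ Fintype.card α) (h : IsStep (Fintype.card α) k i #(a ∩ c) t') :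
    ∃ c' : Finset α, #c' = k ∧ #(c ∩ c') = i ∧ #(a ∩ c') = t' := by
  obtain ⟨h₁, h₂, h₃, h₄⟩ := h
  set t := #(a ∩ c)
  -- the size of `a ∩ c ∩ c'`, the one free parameter of the Venn diagram
  set x := max (max (t + i - k) (t' + i - k)) (t + t' - k)
  have hca : #(c ∩ a) = t := by rw [inter_comm]
  have hc_sdiff_a : #(c \ a) = k - t := by rw [card_sdiff, hc]
  have hcc_inter_a : #(cᶜ ∩ a) = k - t := by
    rw [inter_comm, ← sdiff_eq_inter_compl, card_sdiff, ha, hca]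
  have hcc_sdiff_a : #(cᶜ \ a) = Fintype.card α - k - (k - t) := by
    rw [card_sdiff, card_compl, hc, inter_comm, hcc_inter_a]
  obtain ⟨s, hsc, hs, hsa⟩ := exists_subset_card_eq_card_inter_eq (s := c) (a := a)
    (m := x) (n := i - x) (by omega) (by omega)
  obtain ⟨u, huc, hu, hua⟩ := exists_subset_card_eq_card_inter_eq (s := cᶜ) (a := a)
    (m := t' - x) (n := k - i - (t' - x)) (by omega) (by omega)
  have hsu : Disjoint s u :=
    disjoint_of_subset_left hsc (disjoint_of_subset_right huc disjoint_compl_right)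
  refine ⟨s ∪ u, ?_, ?_, ?_⟩
  · rw [card_union_of_disjoint hsu]; omega
  · rw [inter_union_distrib_left, inter_eq_right.2 hsc, disjoint_iff_inter_eq_empty.1
      (disjoint_of_subset_right huc disjoint_compl_right), union_empty]
    omega
  · rw [inter_union_distrib_left, card_union_of_disjoint (disjoint_of_subset_left
      inter_subset_right (disjoint_of_subset_right inter_subset_right hsu)),
      inter_comm, hsa, inter_comm, hua]
    omega

end Venn

/-- `Reach v k i n t`: a vertex of `J(v,k,i)` meeting a fixed vertex `A` in `t` points is joined
to `A` by a walk of length exactly `n` (see `exists_walk_length_eq_iff`). -/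
def Reach (v k i : ℕ) : ℕ → ℕ → Prop
  | 0, t => t = k
  | n + 1, t => ∃ t', IsStep v k i t t' ∧ Reach v k i n t'

variable {v k i : ℕ}

theorem Reach.le_add_mul {n t : ℕ} (h : Reach v k i n t) : k ≤ t + (k - i) * n := by
  induction n generalizing t with
  | zero => exact h.ge.trans (Nat.le_add_right _ _)
  | succ n ih =>
    obtain ⟨t', ⟨hs, -⟩, h⟩ := h
    have := ih h
    rw [Nat.mul_add_one]
    omega

theorem three_le_of_reach_zero (hi : 0 < i) (hv : v + 2 * i < 3 * k) {n : ℕ}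
    (h : Reach v k i n 0) : 3 ≤ n := by
  match n, h with
  | 0, h => have : 0 = k := h; omega
  | 1, ⟨t, hs, ht⟩ => subst ht; obtain ⟨_, _, _, _⟩ := hs; omega
  | 2, ⟨t, hs, t', hs', ht'⟩ =>
    subst ht'; obtain ⟨_, _, _, _⟩ := hs; obtain ⟨_, _, _, _⟩ := hs'; omega
  | n + 3, _ => omega

section Delta

variable {D : ℕ} (hD : D + 2 * k = v + 2 * i)
include hD

theorem Reach.le_add_mul_of_two_mul {m t : ℕ} (h : Reach v k i (2 * m) t) : k ≤ t + D * m := by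
  induction m generalizing t with
  | zero => exact h.ge.trans (Nat.le_add_right _ _)
  | succ m ih =>
    obtain ⟨t', ⟨-, -, -, hs⟩, t'', ⟨-, -, hs', -⟩, h⟩ := h
    have := ih h
    rw [Nat.mul_add_one]
    omega

theorem Reach.le_add_mul_of_two_mul_add_one {m t : ℕ} (h : Reach v k i (2 * m + 1) t) :
    t ≤ i + D * m := by
  obtain ⟨t', ⟨-, -, hs, -⟩, h⟩ := h
  have := h.le_add_mul_of_two_mul hD
  omega

theorem exists_reach_le_two_mul :
    ∀ a t, i ≤ t → t ≤ k → k ≤ t + D * a → ∃ m ≤ 2 * a, Reach v k i m t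
  | 0, t, _, _, h => ⟨0, le_rfl, show t = k by rw [Nat.mul_zero] at h; omega⟩
  | a + 1, t, hit, htk, h => by
    rw [Nat.mul_add_one] at h
    obtain ⟨m, hm, hr⟩ := exists_reach_le_two_mul a (min k (t + D)) (by omega)
      (by omega) (by omega)
    exact ⟨m + 2, by omega, max i (k + i - D - t), by unfold IsStep; omega,
      min k (t + D), by unfold IsStep; omega, hr⟩

theorem exists_reach_le_two_mul_add_one {a t : ℕ} (hit : i ≤ t) (htk : t ≤ k)
    (h : t ≤ i + D * a) : ∃ m ≤ 2 * a + 1, Reach v k i m t := by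
  obtain ⟨m, hm, hr⟩ := exists_reach_le_two_mul hD a (k + i - t) (by omega) (by omega) (by omega)
  exact ⟨m + 1, by omega, k + i - t, by unfold IsStep; omega, hr⟩

theorem exists_reach_le_add_one_of_le {n t : ℕ} (hit : i ≤ t) (htk : t ≤ k)
    (h : k - i - 1 ≤ D * n) : ∃ m ≤ n + 1, Reach v k i m t := by
  obtain ⟨a, rfl | rfl⟩ := Nat.even_or_odd' n
  · rw [two_mul, Nat.mul_add] at h
    by_cases hk : k ≤ t + D * a
    · obtain ⟨m, hm, hr⟩ := exists_reach_le_two_mul hD a t hit htk hk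
      exact ⟨m, by omega, hr⟩
    · exact exists_reach_le_two_mul_add_one hD hit htk (by omega)
  · rw [show 2 * a + 1 = a + (a + 1) by ring, Nat.mul_add] at h
    by_cases hk : k ≤ t + D * (a + 1)
    · obtain ⟨m, hm, hr⟩ := exists_reach_le_two_mul hD (a + 1) t hit htk hk
      exact ⟨m, by omega, hr⟩
    · obtain ⟨m, hm, hr⟩ := exists_reach_le_two_mul_add_one hD hit htk (a := a) (by omega)
      exact ⟨m, by omega, hr⟩

theorem exists_reach_le_ceilDiv_add_one (h2k : 2 * k ≤ v) (hD0 : 0 < D)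
    (hsmall : i = 0 ∨ v + 3 * i + 2 ≤ 3 * k) {t : ℕ} (ht : t ≤ k) :
    ∃ n ≤ (k - i - 1) ⌈/⌉ D + 1, Reach v k i n t := by
  have hq : k - i - 1 ≤ D * ((k - i - 1) ⌈/⌉ D) := le_smul_ceilDiv hD0
  rcases le_or_gt i t with hit | hti
  · exact exists_reach_le_add_one_of_le hD hit ht hq
  have hq2 : 2 ≤ (k - i - 1) ⌈/⌉ D := by
    by_contra h
    have := (ceilDiv_le_iff_le_mul hD0).1 (Nat.le_of_lt_succ (not_le.1 h))
    omega
  by_cases hti' : k + i ≤ D + t + i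
  · exact ⟨2, by omega, i, by unfold IsStep; omega, k, by unfold IsStep; omega, rfl⟩
  · exact ⟨3, by omega, k + i - D - t, by unfold IsStep; omega, i, by unfold IsStep; omega,
      k, by unfold IsStep; omega, rfl⟩

theorem exists_forall_reach_ceilDiv_add_one_le (hD0 : 0 < D) (hik : i < k) :
    ∃ t ≤ k, ∀ n, Reach v k i n t → (k - i - 1) ⌈/⌉ D + 1 ≤ n := by
  set q := (k - i - 1) ⌈/⌉ D
  rcases Nat.eq_zero_or_pos q with hq | hq
  · refine ⟨0, Nat.zero_le _, fun n hn => ?_⟩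
    rcases n with _ | n
    · exact absurd (show 0 = k from hn) (by omega)
    · omega
  have hlt : D * (q - 1) < k - i - 1 :=
    lt_of_not_ge fun h => by have := (ceilDiv_le_iff_le_mul hD0).2 h; omega
  set c := (q - 1) / 2
  have hc : D * c ≤ D * (q - 1) := Nat.mul_le_mul_left _ (by omega)
  refine ⟨i + D * c + 1, by omega, fun n hn => ?_⟩
  obtain ⟨m, rfl | rfl⟩ := Nat.even_or_odd' n
  · have := hn.le_add_mul_of_two_mul hD
    have : q ≤ c + m := (ceilDiv_le_iff_le_mul hD0).2 (by rw [Nat.mul_add]; omega)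
    omega
  · have := hn.le_add_mul_of_two_mul_add_one hD
    have : c < m := Nat.lt_of_mul_lt_mul_left (a := D) (by omega)
    omega

theorem exists_reach_le_three (h2k : 2 * k ≤ v) (hv : 3 * k ≤ v + 3 * i + 1)
    (hv' : v + 2 * i < 3 * k) {t : ℕ} (ht : t ≤ k) :
    ∃ n ≤ 3, Reach v k i n t := by
  rcases ht.eq_or_lt with rfl | htk
  · exact ⟨0, Nat.zero_le _, rfl⟩
  -- `t₁` is the least value allowed both after `t` and before `i`
  set t₁ := max (k - D) (max (k + i - D - t) (t - (k - i)))
  exact ⟨3, le_rfl, t₁, by unfold IsStep; omega, i, by unfold IsStep; omega, k,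
    by unfold IsStep; omega, rfl⟩

end Delta

theorem exists_reach_le_of_le_add_mul (h2k : 2 * k ≤ v) (hik : i < k) (hv : 3 * k ≤ v + 2 * i) :
    ∀ n t, t ≤ i → k ≤ t + (k - i) * (n + 1) → ∃ m ≤ n + 1, Reach v k i m t
  | 0, t, hti, h => ⟨1, le_rfl, k, by unfold IsStep; omega, rfl⟩
  | n + 1, t, hti, h => by
    rw [Nat.mul_add_one] at h
    by_cases hit : i ≤ t + (k - i)
    · exact ⟨2, by omega, i, by unfold IsStep; omega, k, by unfold IsStep; omega, rfl⟩
    · obtain ⟨m, hm, hr⟩ := exists_reach_le_of_le_add_mul h2k hik hv n (t + (k - i)) (by omega)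
        (by omega)
      exact ⟨m + 1, by omega, t + (k - i), by unfold IsStep; omega, hr⟩

theorem exists_reach_le_ceilDiv (h2k : 2 * k ≤ v) (hi : 0 < i) (hik : i < k)
    (hv : 3 * k ≤ v + 2 * i) {t : ℕ} (ht : t ≤ k) : ∃ n ≤ k ⌈/⌉ (k - i), Reach v k i n t := by
  have hK : 0 < k - i := by omega
  have hF : k ≤ (k - i) * (k ⌈/⌉ (k - i)) := le_smul_ceilDiv hK
  have h2 : 2 ≤ k ⌈/⌉ (k - i) := by
    by_contra h
    have := (ceilDiv_le_iff_le_mul hK).1 (Nat.le_of_lt_succ (not_le.1 h))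
    omega
  rcases ht.eq_or_lt with rfl | htk
  · exact ⟨0, Nat.zero_le _, rfl⟩
  rcases le_or_gt t i with hti | hit
  · obtain ⟨F, hF'⟩ := Nat.exists_eq_add_one_of_ne_zero (by omega : k ⌈/⌉ (k - i) ≠ 0)
    rw [hF'] at hF ⊢
    exact exists_reach_le_of_le_add_mul h2k hik hv F t hti (by omega)
  · exact ⟨2, h2, i, by unfold IsStep; omega, k, by unfold IsStep; omega, rfl⟩

theorem exists_walk_length_eq_iff (hik : i < k) (h2k : 2 * k ≤ v)
    (A : {A : Finset (Fin v) // #A = k}) (n : ℕ) (C : {A : Finset (Fin v) // #A = k}) :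
    (∃ w : (genJohnsonGraph v k i).Walk C A, w.length = n) ↔ Reach v k i n #(A.1 ∩ C.1) := by
  induction n generalizing C with
  | zero =>
    refine ⟨fun ⟨w, hw⟩ => ?_, fun h => ?_⟩
    · rw [SimpleGraph.Walk.eq_of_length_eq_zero hw, inter_self]
      exact A.2
    · obtain rfl : A = C :=
        Subtype.ext (eq_of_card_inter_eq (A.2.trans C.2.symm) (h.trans A.2.symm))
      exact ⟨.nil, rfl⟩
  | succ n ih =>
    refine ⟨fun ⟨w, hw⟩ => ?_, fun ⟨t', hs, hr⟩ => ?_⟩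
    · cases w with
      | nil => simp at hw
      | @cons _ C' _ hadj p =>
        exact ⟨_, by simpa only [Fintype.card_fin] using isStep_card_inter A.2 C.2 C'.2 hadj.2,
          (ih C').1 ⟨p, by simpa using hw⟩⟩
    · obtain ⟨C', hC', hCC', hAC'⟩ := exists_card_inter_eq_of_isStep A.2 C.2
        (by simpa using h2k) (by simpa only [Fintype.card_fin] using hs)
      have hadj : (genJohnsonGraph v k i).Adj C ⟨C', hC'⟩ := by
        refine ⟨fun h => ?_, hCC'⟩
        rw [show C' = C.1 from congrArg Subtype.val h.symm, inter_self, C.2] at hCC'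
        omega
      obtain ⟨p, hp⟩ := (ih ⟨C', hC'⟩).2 (hAC' ▸ hr)
      exact ⟨.cons hadj p, by simp [hp]⟩

theorem diam_eq_of_reach (hik : i < k) (h2k : 2 * k ≤ v) {F : ℕ}
    (hle : ∀ t ≤ k, ∃ n ≤ F, Reach v k i n t) (hge : ∃ t ≤ k, ∀ n, Reach v k i n t → F ≤ n) :
    (genJohnsonGraph v k i).diam = F := by
  refine SimpleGraph.diam_eq_of_forall_exists_walk_length_le (fun C A => ?_) ?_
  · obtain ⟨n, hn, hr⟩ := hle _ (A.2 ▸ card_le_card inter_subset_left)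
    obtain ⟨w, rfl⟩ := (exists_walk_length_eq_iff hik h2k A n C).2 hr
    exact ⟨w, hn⟩
  · obtain ⟨t, ht, h⟩ := hge
    obtain ⟨A, C, hA, hC, hAC⟩ := exists_card_eq_card_inter_eq (α := Fin v) ht (by simpa using h2k)
    refine ⟨⟨C, hC⟩, ⟨A, hA⟩, fun w => h _ ?_⟩
    exact hAC ▸ (exists_walk_length_eq_iff hik h2k ⟨A, hA⟩ _ ⟨C, hC⟩).1 ⟨w, rfl⟩

end genJohnsonGraph

theorem diam_formula_general (v k i : ℕ) (hik : i < k)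
    (h2k : 2 * k ≤ v) (hexc : ¬(v = 2 * k ∧ i = 0)) :
    ((v < 3 * (k - i) - 1 ∨ i = 0) →
      (genJohnsonGraph v k i).diam = (k - i - 1) ⌈/⌉ (v - 2 * k + 2 * i) + 1) ∧
    (3 * (k - i) - 1 ≤ v → v < 3 * k - 2 * i → i ≠ 0 →
      (genJohnsonGraph v k i).diam = 3) ∧
    (3 * k - 2 * i ≤ v → i ≠ 0 →
      (genJohnsonGraph v k i).diam = k ⌈/⌉ (k - i)) := by
  have hD : v - 2 * k + 2 * i + 2 * k = v + 2 * i := by omega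
  open genJohnsonGraph in
  exact ⟨fun h => diam_eq_of_reach hik h2k
      (fun t => exists_reach_le_ceilDiv_add_one hD h2k (by omega) (by omega))
      (exists_forall_reach_ceilDiv_add_one_le hD (by omega) hik),
    fun h₁ h₂ hi => diam_eq_of_reach hik h2k
      (fun t => exists_reach_le_three hD h2k (by omega) (by omega))
      ⟨0, Nat.zero_le _, fun n => three_le_of_reach_zero (by omega) (by omega)⟩,
    fun h hi => diam_eq_of_reach hik h2k
      (fun t => exists_reach_le_ceilDiv h2k (by omega) hik (by omega))
      ⟨0, Nat.zero_le _, fun n hn =>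
        (ceilDiv_le_iff_le_mul (by omega)).2 (by simpa using hn.le_add_mul)⟩⟩

/-- The diameter of `J(v,k,i)`: `⌈(k-i-1)/Δ⌉ + 1` if `v < 3(k-i) - 1` or `i = 0`;
`3` if `3(k-i) - 1 ≤ v < 3k - 2i` and `i ≠ 0`; and `⌈k/(k-i)⌉` if `v ≥ 3k - 2i`
and `i ≠ 0`. -/
theorem diam_formula (v k i : ℕ) (hik : i < k) (hkv : k < v)
    (h2k : 2 * k ≤ v) (hexc : ¬(v = 2 * k ∧ i = 0)) :
    ((v < 3 * (k - i) - 1 ∨ i = 0) →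
      (genJohnsonGraph v k i).diam = (k - i - 1) ⌈/⌉ (v - 2 * k + 2 * i) + 1) ∧
    (3 * (k - i) - 1 ≤ v → v < 3 * k - 2 * i → i ≠ 0 →
      (genJohnsonGraph v k i).diam = 3) ∧
    (3 * k - 2 * i ≤ v → i ≠ 0 →
      (genJohnsonGraph v k i).diam = k ⌈/⌉ (k - i)) :=
  diam_formula_general v k i hik h2k hexc
end

section
/- Assume the girth of X = J(v,k,i) equals 4. Then every odd cycle in X has length at least 2⌈(k − i)/Δ⌉ + 1; that is, og(X) ≥ 2⌈(k − i)/Δ⌉ + 1. -/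
/-!
Two steps of `J(v,k,i)` move a vertex by at most `Δ = v - 2k + 2i` elements: if `C ~ D ~ B`,
every element of `C \ B` lies either in `C ∩ D` (`i` elements) or outside `B ∪ D`
(`v - (2k - i)` elements). Hence after `2m` steps from `A` at most `mΔ` elements of `A` are lost.
An odd closed walk of length `2m + 1` ends with a vertex at position `2m` adjacent to `A`, which
has lost exactly `k - i` elements of `A`; so `k - i ≤ mΔ`, i.e. `⌈(k - i)/Δ⌉ ≤ m`.
-/

lemma Nat.ceilDiv_le_of_le_mul {a b c : ℕ} (h : b ≤ a * c) : b ⌈/⌉ a ≤ c := by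
  rcases Nat.eq_zero_or_pos a with rfl | ha
  · simp
  · exact (ceilDiv_le_iff_le_mul ha).2 h

lemma Finset.card_sdiff_le_of_card_inter_eq {α : Type*} [Fintype α] [DecidableEq α]
    {k i : ℕ} {B C D : Finset α} (hB : B.card = k) (hD : D.card = k)
    (hCD : (C ∩ D).card = i) (hDB : (D ∩ B).card = i) :
    (C \ B).card ≤ Fintype.card α - 2 * k + 2 * i := by
  have hsub : C \ B ⊆ (B ∪ D)ᶜ ∪ (C ∩ D) := by
    intro x
    simp only [mem_sdiff, mem_union, mem_compl, mem_inter]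
    tauto
  have hBD : (B ∪ D).card + (D ∩ B).card = B.card + D.card := by
    rw [inter_comm]; exact card_union_add_card_inter B D
  have hcompl : (B ∪ D)ᶜ.card = Fintype.card α - (B ∪ D).card := card_compl _
  have hle : (B ∪ D).card ≤ Fintype.card α := card_le_univ _
  have := (card_le_card hsub).trans (card_union_le _ _)
  omega

namespace genJohnsonGraph

variable {v k i : ℕ}

lemma card_sdiff_le_of_adj_adj {C D B : {A : Finset (Fin v) // A.card = k}}
    (hCD : (genJohnsonGraph v k i).Adj C D) (hDB : (genJohnsonGraph v k i).Adj D B) :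
    (C.1 \ B.1).card ≤ v - 2 * k + 2 * i := by
  simpa using Finset.card_sdiff_le_of_card_inter_eq B.2 D.2 hCD.2 hDB.2

lemma card_sdiff_getVert_two_mul_le {A W : {A : Finset (Fin v) // A.card = k}}
    (p : (genJohnsonGraph v k i).Walk A W) {m : ℕ} (hm : 2 * m ≤ p.length) :
    (A.1 \ (p.getVert (2 * m)).1).card ≤ m * (v - 2 * k + 2 * i) := by
  induction m with
  | zero => simp
  | succ m ih =>
    set C := p.getVert (2 * m)
    set B := p.getVert (2 * m + 1 + 1)
    have hstep : (C.1 \ B.1).card ≤ v - 2 * k + 2 * i :=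
      card_sdiff_le_of_adj_adj (p.adj_getVert_succ (by omega)) (p.adj_getVert_succ (by omega))
    rw [show 2 * (m + 1) = 2 * m + 1 + 1 by ring]
    calc (A.1 \ B.1).card ≤ (A.1 \ C.1 ∪ C.1 \ B.1).card :=
          Finset.card_le_card (sdiff_triangle _ _ _)
      _ ≤ (A.1 \ C.1).card + (C.1 \ B.1).card := Finset.card_union_le _ _
      _ ≤ m * (v - 2 * k + 2 * i) + (v - 2 * k + 2 * i) := add_le_add (ih (by omega)) hstep
      _ = (m + 1) * (v - 2 * k + 2 * i) := by ring

end genJohnsonGraph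

theorem odd_girth_lower_bound_general (v k i : ℕ) :
    ∀ (A : {A : Finset (Fin v) // A.card = k})
      (c : (genJohnsonGraph v k i).Walk A A),
      c.IsCycle → Odd c.length →
        2 * ((k - i) ⌈/⌉ (v - 2 * k + 2 * i)) + 1 ≤ c.length := by
  rintro A c - ⟨m, hm⟩
  have hlost := genJohnsonGraph.card_sdiff_getVert_two_mul_le c (m := m) (by omega)
  have hlast : (genJohnsonGraph v k i).Adj (c.getVert (2 * m)) A := by
    simpa [← hm] using c.adj_getVert_succ (by omega : 2 * m < c.length)
  have hcard : (A.1 \ (c.getVert (2 * m)).1).card = k - i := by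
    rw [Finset.card_sdiff, hlast.2, A.2]
  have := Nat.ceilDiv_le_of_le_mul (hcard ▸ hlost.trans_eq (mul_comm _ _))
  omega

/-- If `J(v,k,i)` has girth 4, then every odd cycle has length at least
`2⌈(k-i)/Δ⌉ + 1`, i.e. `og(X) ≥ 2⌈(k-i)/Δ⌉ + 1`. -/
theorem odd_girth_lower_bound (v k i : ℕ) (hik : i < k) (hkv : k < v)
    (h2k : 2 * k ≤ v) (hexc : ¬(v = 2 * k ∧ i = 0))
    (hg : (genJohnsonGraph v k i).girth = 4) :
    ∀ (A : {A : Finset (Fin v) // A.card = k})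
      (c : (genJohnsonGraph v k i).Walk A A),
      c.IsCycle → Odd c.length →
        2 * ((k - i) ⌈/⌉ (v - 2 * k + 2 * i)) + 1 ≤ c.length :=
  odd_girth_lower_bound_general v k i
end
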